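/- Let a, b, c, k, l, m be nonnegative integers with l ≤ b, l ≤ c and m ≤ l. Set L = a+k+l, B = {−(b−l)+1, ..., −1, 0} and C = {L+1, ..., L+(c−l)}. Let X = {x₁,...,x_{m+k}} and Y = {y₁,...,y_m} be disjoint subsets of [L]. Then (Σ_Z Δ(B∪X∪Z∪C)·Δ(Y∪Z)) · ∏_{j=1}^{m}(y_j)_{b−l}·(a+k+l+1−y_j)_{c−l} = (Σ_Z Δ(X∪Z)·Δ(B∪Y∪Z∪C)) · ∏_{i=1}^{m+k}(x_i)_{b−l}·(a+k+l+1−x_i)_{c−l}, where both sums range over all subsets Z ⊆ [L]∖(X∪Y) with |Z| = l−m. -/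
import Mathlib


/-- `Δ(S) = ∏_{s₁,s₂ ∈ S, s₁ < s₂} (s₂ - s₁)`. -/
def Dset (S : Finset ℤ) : ℤ :=
  ∏ x ∈ S, ∏ y ∈ S.filter (fun y => x < y), (y - x)

/-- `Δ(S,T) = ∏_{s ∈ S, t ∈ T} |t - s|`. -/
def Dpair (S T : Finset ℤ) : ℤ :=
  ∏ s ∈ S, ∏ t ∈ T, |t - s|

/-- The Pochhammer symbol `(a)ₙ = a(a+1)···(a+n-1)`. -/
noncomputable def poch (a : ℤ) (n : ℕ) : ℤ :=
  Polynomial.eval a (ascPochhammer ℤ n)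

lemma poch_eq_prod_range (s : ℤ) (n : ℕ) :
    poch s n = ∏ j ∈ Finset.range n, (s + j) := by
  induction n with
  | zero => simp [poch]
  | succ n ih =>
      rw [poch, ascPochhammer_succ_right, Polynomial.eval_mul, ← poch, ih,
        Finset.prod_range_succ]
      simp

lemma cross_prod {A S : Finset ℤ} (h : Disjoint A S) :
    Dpair A S = (∏ x ∈ A, ∏ y ∈ S.filter (fun y => x < y), (y - x)) *
      (∏ x ∈ S, ∏ y ∈ A.filter (fun y => x < y), (y - x)) := by
  unfold Dpair
  have h1 : ∀ a ∈ A, (∏ s ∈ S, |s - a|)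
      = (∏ s ∈ S.filter (fun y => a < y), (s - a)) *
        (∏ s ∈ S.filter (fun y => y < a), (a - s)) := by
    intro a ha
    rw [← Finset.prod_filter_mul_prod_filter_not S (fun y => a < y)]
    congr 1
    · exact Finset.prod_congr rfl fun s hs => by
        rw [Finset.mem_filter] at hs
        rw [abs_of_pos (by linarith [hs.2])]
    · have hfe : S.filter (fun y => ¬ a < y) = S.filter (fun y => y < a) := by
        apply Finset.filter_congr
        intro s hs
        have : s ≠ a := fun he => (Finset.disjoint_right.mp h hs) (he ▸ ha)
        constructor <;> intro h' <;> omega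
      rw [hfe]
      exact Finset.prod_congr rfl fun s hs => by
        rw [Finset.mem_filter] at hs
        rw [abs_of_neg (by linarith [hs.2]), neg_sub]
  rw [Finset.prod_congr rfl h1, Finset.prod_mul_distrib]
  congr 1
  refine Finset.prod_comm' ?_
  intro x y
  simp only [Finset.mem_filter]
  tauto

lemma Dset_union {A S : Finset ℤ} (h : Disjoint A S) :
    Dset (A ∪ S) = Dset A * Dset S * Dpair A S := by
  unfold Dset
  rw [Finset.prod_union h]
  have e : ∀ T : Finset ℤ, (∏ x ∈ T, ∏ y ∈ (A ∪ S).filter (fun y => x < y), (y - x))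
      = (∏ x ∈ T, ∏ y ∈ A.filter (fun y => x < y), (y - x)) *
        (∏ x ∈ T, ∏ y ∈ S.filter (fun y => x < y), (y - x)) := by
    intro T
    rw [← Finset.prod_mul_distrib]
    refine Finset.prod_congr rfl fun x _ => ?_
    rw [Finset.filter_union, Finset.prod_union (Finset.disjoint_filter_filter h)]
  rw [e A, e S, cross_prod h]
  ring

lemma Dpair_union_left {A B C : Finset ℤ} (h : Disjoint A B) :
    Dpair (A ∪ B) C = Dpair A C * Dpair B C := by
  unfold Dpair
  exact Finset.prod_union h

lemma prod_Icc_left (s : ℤ) (n : ℕ) :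
    ∏ a ∈ Finset.Icc (1 - (n : ℤ)) 0, (s - a) = poch s n := by
  rw [poch_eq_prod_range]
  induction n with
  | zero => simp
  | succ n ih =>
      have hins : Finset.Icc (1 - ((n + 1 : ℕ) : ℤ)) 0
          = insert (-(n : ℤ)) (Finset.Icc (1 - (n : ℤ)) 0) := by
        ext x
        simp only [Finset.mem_Icc, Finset.mem_insert]
        omega
      rw [hins, Finset.prod_insert (by simp only [Finset.mem_Icc]; omega), ih,
        Finset.prod_range_succ]
      push_cast
      ring

lemma prod_Icc_right (s w : ℤ) (n : ℕ) :
    ∏ t ∈ Finset.Icc (w + 1) (w + (n : ℤ)), (t - s) = poch (w + 1 - s) n := by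
  rw [poch_eq_prod_range]
  induction n with
  | zero => simp
  | succ n ih =>
      have hins : Finset.Icc (w + 1) (w + ((n + 1 : ℕ) : ℤ))
          = insert (w + (n : ℤ) + 1) (Finset.Icc (w + 1) (w + (n : ℤ))) := by
        ext x
        simp only [Finset.mem_Icc, Finset.mem_insert]
        omega
      rw [hins, Finset.prod_insert (by simp only [Finset.mem_Icc]; omega), ih,
        Finset.prod_range_succ]
      push_cast
      ring

lemma Dpair_left_poch (n : ℕ) (S : Finset ℤ) (hS : ∀ s ∈ S, 1 ≤ s) :
    Dpair (Finset.Icc (1 - (n : ℤ)) 0) S = ∏ s ∈ S, poch s n := by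
  unfold Dpair
  rw [Finset.prod_comm]
  refine Finset.prod_congr rfl fun s hs => ?_
  rw [← prod_Icc_left s n]
  refine Finset.prod_congr rfl fun t ht => ?_
  rw [Finset.mem_Icc] at ht
  have := hS s hs
  rw [abs_of_pos (by omega)]

lemma Dpair_right_poch (n : ℕ) (w : ℤ) (S : Finset ℤ) (hS : ∀ s ∈ S, s ≤ w) :
    Dpair S (Finset.Icc (w + 1) (w + (n : ℤ))) = ∏ s ∈ S, poch (w + 1 - s) n := by
  unfold Dpair
  refine Finset.prod_congr rfl fun s hs => ?_
  rw [← prod_Icc_right s w n]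
  refine Finset.prod_congr rfl fun t ht => ?_
  rw [Finset.mem_Icc] at ht
  have := hS s hs
  rw [abs_of_pos (by omega)]

lemma decomp (n₁ n₂ : ℕ) (w : ℤ) (hw : 0 ≤ w) (S : Finset ℤ)
    (hS : ∀ s ∈ S, 1 ≤ s ∧ s ≤ w) :
    Dset (Finset.Icc (1 - (n₁ : ℤ)) 0 ∪ S ∪ Finset.Icc (w + 1) (w + (n₂ : ℤ)))
      = (Dset (Finset.Icc (1 - (n₁ : ℤ)) 0) * Dset (Finset.Icc (w + 1) (w + (n₂ : ℤ)))
          * Dpair (Finset.Icc (1 - (n₁ : ℤ)) 0) (Finset.Icc (w + 1) (w + (n₂ : ℤ))))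
        * Dset S * ∏ s ∈ S, (poch s n₁ * poch (w + 1 - s) n₂) := by
  have hBS : Disjoint (Finset.Icc (1 - (n₁ : ℤ)) 0) S := by
    rw [Finset.disjoint_left]
    intro x hx hx'
    rw [Finset.mem_Icc] at hx
    have := (hS x hx').1
    omega
  have hBSC : Disjoint (Finset.Icc (1 - (n₁ : ℤ)) 0 ∪ S) (Finset.Icc (w + 1) (w + (n₂ : ℤ))) := by
    rw [Finset.disjoint_left]
    intro x hx hx'
    rw [Finset.mem_Icc] at hx'
    rcases Finset.mem_union.mp hx with h | h
    · rw [Finset.mem_Icc] at h; omega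
    · have := (hS x h).2; omega
  rw [Dset_union hBSC, Dset_union hBS, Dpair_union_left hBS,
    Dpair_left_poch n₁ S (fun s hs => (hS s hs).1),
    Dpair_right_poch n₂ w S (fun s hs => (hS s hs).2),
    Finset.prod_mul_distrib]
  ring

theorem product_formula_case_l_le_b (a b c k l m : ℕ)
    (hlb : l ≤ b) (hlc : l ≤ c) (hml : m ≤ l)
    (L : ℕ) (hL : L = a + k + l)
    (B C : Finset ℤ)
    (hB : B = Finset.Icc ((l : ℤ) - b + 1) 0)
    (hC : C = Finset.Icc ((L : ℤ) + 1) ((L : ℤ) + c - l))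
    (X Y : Finset ℤ)
    (hX : X ⊆ Finset.Icc (1 : ℤ) L) (hY : Y ⊆ Finset.Icc (1 : ℤ) L)
    (hXY : Disjoint X Y)
    (hXcard : X.card = m + k) (hYcard : Y.card = m) :
    (∑ Z ∈ Finset.powersetCard (l - m) (Finset.Icc (1 : ℤ) L \ (X ∪ Y)),
        Dset (B ∪ X ∪ Z ∪ C) * Dset (Y ∪ Z)) *
      (∏ y ∈ Y, poch y (b - l) * poch ((a : ℤ) + k + l + 1 - y) (c - l)) =
    (∑ Z ∈ Finset.powersetCard (l - m) (Finset.Icc (1 : ℤ) L \ (X ∪ Y)),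
        Dset (X ∪ Z) * Dset (B ∪ Y ∪ Z ∪ C)) *
      (∏ x ∈ X, poch x (b - l) * poch ((a : ℤ) + k + l + 1 - x) (c - l)) := by
  have hBeq : B = Finset.Icc (1 - ((b - l : ℕ) : ℤ)) 0 := by
    rw [hB]; congr 1; omega
  have hCeq : C = Finset.Icc ((L : ℤ) + 1) ((L : ℤ) + ((c - l : ℕ) : ℤ)) := by
    rw [hC]; congr 1; omega
  have hparg : ∀ s : ℤ, (a : ℤ) + k + l + 1 - s = (L : ℤ) + 1 - s := by
    intro s; omega
  simp only [hparg]
  rw [Finset.sum_mul, Finset.sum_mul]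
  refine Finset.sum_congr rfl fun Z hZ => ?_
  rw [Finset.mem_powersetCard] at hZ
  have hZsub : Z ⊆ Finset.Icc (1 : ℤ) (L : ℤ) \ (X ∪ Y) := hZ.1
  have hXZ : Disjoint X Z := by
    rw [Finset.disjoint_right]
    intro z hz hx
    exact (Finset.mem_sdiff.mp (hZsub hz)).2 (Finset.mem_union_left _ hx)
  have hYZ : Disjoint Y Z := by
    rw [Finset.disjoint_right]
    intro z hz hy
    exact (Finset.mem_sdiff.mp (hZsub hz)).2 (Finset.mem_union_right _ hy)
  have hXZmem : ∀ s ∈ X ∪ Z, 1 ≤ s ∧ s ≤ (L : ℤ) := by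
    intro s hs
    rcases Finset.mem_union.mp hs with h | h
    · exact Finset.mem_Icc.mp (hX h)
    · exact Finset.mem_Icc.mp (Finset.mem_sdiff.mp (hZsub h)).1
  have hYZmem : ∀ s ∈ Y ∪ Z, 1 ≤ s ∧ s ≤ (L : ℤ) := by
    intro s hs
    rcases Finset.mem_union.mp hs with h | h
    · exact Finset.mem_Icc.mp (hY h)
    · exact Finset.mem_Icc.mp (Finset.mem_sdiff.mp (hZsub h)).1
  have hw : (0 : ℤ) ≤ (L : ℤ) := Int.natCast_nonneg L
  rw [Finset.union_assoc B X Z, Finset.union_assoc B Y Z, hBeq, hCeq,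
    decomp (b - l) (c - l) (L : ℤ) hw (X ∪ Z) hXZmem,
    decomp (b - l) (c - l) (L : ℤ) hw (Y ∪ Z) hYZmem,
    Finset.prod_union hXZ, Finset.prod_union hYZ]
  ring
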